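/- arXiv:2604.19490 — 3 statements merged into one kernel-verified Lean document; each statement's English description precedes it below -/
import Mathlib

section
/- The number of quadruples (a1,a2,a3,a4) of nonnegative integers satisfying 0 ≤ a1 ≤ m2, 0 ≤ a2 ≤ m1 + 2·a1, 0 ≤ a3 ≤ min(⌊(a2+m1)/2⌋, a2), and 0 ≤ a4 ≤ min(m1, a3) equals (1/6)·(m1+1)·(m2+1)·(m1+m2+2)·(m1+2·m2+3), the Weyl dimension of the irreducible sp4-module with highest weight m1·ω1 + m2·ω2. -/
/-!
Counting the quadruple one coordinate at a time, from the first, turns the cardinality into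
an iterated sum: `a4` contributes `min m1 a3 + 1`. For `a2 ≤ m1` the bound on `a3` is `a2`,
giving triangular numbers; for `a2 = m1 + j` it is `m1 + ⌊j/2⌋`, so each further pair of
values of `a2` adds one more full column of height `m1 + 1`. The sum over `a2` is therefore
a quadratic polynomial in `a1`, and summing it over `a1 ≤ m2` gives the Weyl polynomial.
-/

open Finset

def fstLeEquivSigma {α : Type*} (n : ℕ) (P : ℕ × α → Prop) :
    {a : ℕ × α // a.1 ≤ n ∧ P a} ≃ Σ i : Fin (n + 1), {b : α // P (i, b)} where
  toFun a := ⟨⟨a.1.1, Nat.lt_succ_of_le a.2.1⟩, a.1.2, a.2.2⟩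
  invFun x := ⟨(x.1, x.2.1), Nat.le_of_lt_succ x.1.2, x.2.2⟩

theorem finite_subtype_fst_le_and {α : Type*} (n : ℕ) (P : ℕ × α → Prop)
    (hP : ∀ i ≤ n, Finite {b : α // P (i, b)}) : Finite {a : ℕ × α // a.1 ≤ n ∧ P a} :=
  have (i : Fin (n + 1)) : Finite {b : α // P (i, b)} := hP i (Nat.le_of_lt_succ i.2)
  .of_equiv _ (fstLeEquivSigma n P).symm

theorem card_subtype_fst_le_and {α : Type*} (n : ℕ) (P : ℕ × α → Prop)
    (hP : ∀ i ≤ n, Finite {b : α // P (i, b)}) :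
    Nat.card {a : ℕ × α // a.1 ≤ n ∧ P a} = ∑ i ∈ range (n + 1), Nat.card {b : α // P (i, b)} := by
  have (i : Fin (n + 1)) : Finite {b : α // P (i, b)} := hP i (Nat.le_of_lt_succ i.2)
  rw [Nat.card_congr (fstLeEquivSigma n P), Nat.card_sigma,
    Fin.sum_univ_eq_sum_range (fun i => Nat.card {b : α // P (i, b)})]

theorem card_verma_quadruples_eq_sum (m1 m2 : ℕ) :
    Nat.card {a : ℕ × ℕ × ℕ × ℕ //
        a.1 ≤ m2 ∧
        a.2.1 ≤ m1 + 2 * a.1 ∧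
        a.2.2.1 ≤ min ((a.2.1 + m1) / 2) a.2.1 ∧
        a.2.2.2 ≤ min m1 a.2.2.1} =
      ∑ a1 ∈ range (m2 + 1), ∑ a2 ∈ range (m1 + 2 * a1 + 1),
        ∑ a3 ∈ range (min ((a2 + m1) / 2) a2 + 1), (min m1 a3 + 1) := by
  have finite_a4 (c : ℕ) : Finite {a4 : ℕ // a4 ≤ c} := Set.finite_Iic c
  have card_a4 (c : ℕ) : Nat.card {a4 : ℕ // a4 ≤ c} = c + 1 := by
    change Nat.card (Set.Iic c) = c + 1
    simp
  have finite_a3 (a2 : ℕ) := finite_subtype_fst_le_and (min ((a2 + m1) / 2) a2)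
    (fun b : ℕ × ℕ => b.2 ≤ min m1 b.1) fun a3 _ => finite_a4 (min m1 a3)
  have finite_a2 (a1 : ℕ) := finite_subtype_fst_le_and (m1 + 2 * a1)
    (fun b : ℕ × ℕ × ℕ => b.2.1 ≤ min ((b.1 + m1) / 2) b.1 ∧ b.2.2 ≤ min m1 b.2.1)
    fun a2 _ => finite_a3 a2
  rw [card_subtype_fst_le_and _ _ fun a1 _ => finite_a2 a1]
  refine sum_congr rfl fun a1 _ => ?_
  dsimp only
  rw [card_subtype_fst_le_and _ _ fun a2 _ => finite_a3 a2]
  refine sum_congr rfl fun a2 _ => ?_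
  dsimp only
  rw [card_subtype_fst_le_and _ _ fun a3 _ => finite_a4 (min m1 a3)]
  exact sum_congr rfl fun a3 _ => card_a4 (min m1 a3)

theorem two_mul_sum_range_add_one (n : ℕ) :
    2 * ∑ i ∈ range (n + 1), (i + 1) = (n + 1) * (n + 2) := by
  induction n with
  | zero => simp
  | succ n ih => rw [sum_range_succ, mul_add, ih]; ring

theorem six_mul_sum_range_sum_range_add_one (n : ℕ) :
    6 * ∑ i ∈ range (n + 1), ∑ j ∈ range (i + 1), (j + 1) = (n + 1) * (n + 2) * (n + 3) := by
  induction n with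
  | zero => simp
  | succ n ih =>
    have := two_mul_sum_range_add_one (n + 1)
    rw [sum_range_succ, mul_add, ih]
    linear_combination 3 * this

theorem sum_range_min_add_one (m d : ℕ) :
    ∑ j ∈ range (m + 1 + d), (min m j + 1) = ∑ j ∈ range (m + 1), (j + 1) + d * (m + 1) := by
  rw [sum_range_add]
  congr 1
  · exact sum_congr rfl fun j hj => by rw [min_eq_right (Nat.le_of_lt_succ (mem_range.mp hj))]
  · rw [sum_congr rfl fun j _ => by rw [min_eq_left (by omega : m ≤ m + 1 + j)]]
    simp

theorem six_mul_sum_range_two_mul_sum_min (m1 k : ℕ) :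
    6 * ∑ a2 ∈ range (m1 + 2 * k + 1), ∑ a3 ∈ range (min ((a2 + m1) / 2) a2 + 1), (min m1 a3 + 1) =
      (m1 + 1) * (m1 + 2) * (m1 + 3) + 6 * k * (m1 + 1) * (m1 + 2) + 6 * k * k * (m1 + 1) := by
  induction k with
  | zero =>
    simp only [mul_zero, zero_mul, add_zero]
    rw [← six_mul_sum_range_sum_range_add_one m1]
    congr 1
    refine sum_congr rfl fun a2 ha2 => ?_
    have ha2 : a2 ≤ m1 := Nat.le_of_lt_succ (mem_range.mp ha2)
    rw [show min ((a2 + m1) / 2) a2 = a2 by omega]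
    exact sum_congr rfl fun a3 ha3 => by
      rw [min_eq_right (by have := mem_range.mp ha3; omega)]
  | succ k ih =>
    rw [show m1 + 2 * (k + 1) + 1 = m1 + 2 * k + 1 + 1 + 1 by ring, sum_range_succ, sum_range_succ,
      show min ((m1 + 2 * k + 1 + m1) / 2) (m1 + 2 * k + 1) + 1 = m1 + 1 + k by omega,
      show min ((m1 + 2 * k + 1 + 1 + m1) / 2) (m1 + 2 * k + 1 + 1) + 1 = m1 + 1 + (k + 1) by omega,
      sum_range_min_add_one, sum_range_min_add_one]
    have := two_mul_sum_range_add_one m1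
    linear_combination ih + 6 * this

theorem sum_range_cubic_eq_weyl_dim (m1 m2 : ℕ) :
    ∑ k ∈ range (m2 + 1), ((m1 + 1) * (m1 + 2) * (m1 + 3) + 6 * k * (m1 + 1) * (m1 + 2) +
        6 * k * k * (m1 + 1)) =
      (m1 + 1) * (m2 + 1) * (m1 + m2 + 2) * (m1 + 2 * m2 + 3) := by
  induction m2 with
  | zero => simp
  | succ m2 ih => rw [sum_range_succ, ih]; ring

/-- The number of quadruples `(a1,a2,a3,a4)` of nonnegative integers satisfying the
Verma-basis inequalities for `sp₄` equals the Weyl dimension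
`(1/6)(m1+1)(m2+1)(m1+m2+2)(m1+2m2+3)` of `L(m1·ω1 + m2·ω2)`. -/
theorem verma_count_eq_weyl_dim (m1 m2 : ℕ) :
    6 * Nat.card {a : ℕ × ℕ × ℕ × ℕ //
        a.1 ≤ m2 ∧
        a.2.1 ≤ m1 + 2 * a.1 ∧
        a.2.2.1 ≤ min ((a.2.1 + m1) / 2) a.2.1 ∧
        a.2.2.2 ≤ min m1 a.2.2.1} =
      (m1 + 1) * (m2 + 1) * (m1 + m2 + 2) * (m1 + 2 * m2 + 3) := by
  rw [card_verma_quadruples_eq_sum, mul_sum,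
    sum_congr rfl fun a1 _ => six_mul_sum_range_two_mul_sum_min m1 a1]
  exact sum_range_cubic_eq_weyl_dim m1 m2
end

section
/- Let T be a Kashiwara–Nakashima tableau of sp4 of shape (m1+m2, m2) and set a1 = #{entries > 2 in row 2}, a2 = #{entries > 1 in row 1} + #{entries > 2̄ in row 2}, a3 = #{entries > 2 in row 1}, a4 = #{entries > 2̄ in row 1}. Then these satisfy 0 ≤ a1 ≤ m2, 0 ≤ a2 ≤ m1 + 2a1, 0 ≤ a3 ≤ min(⌊(a2+m1)/2⌋, a2), and 0 ≤ a4 ≤ min(m1, a3). -/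
/-!
Each statistic is a count of columns, and column strictness `r1 j < r2 j` transfers a lower
bound on a row-1 entry in one of the first `m2` columns to a row-2 entry in the same column:
`0 < r1 j` forces `1 < r2 j`, `1 < r1 j` forces `2 < r2 j`, and `2 < r1 j` is impossible.
So, with `b = #{0 < r1}` and `c = #{2 < r2}` (so that `a2 = b + c`), each of `b`, `a3`, `a4`
exceeds the corresponding row-2 count (`a1`, `c`, `0`) by at most the `m1` columns of
length one. Together with `c ≤ a1`, `a4 ≤ a3 ≤ b` this is linear arithmetic.
-/

/-- A Kashiwara–Nakashima tableau of `sp₄` of two-row shape `(l1, l2)`.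
Entries lie in `Fin 4`, encoding the alphabet `1 < 2 < 2̄ < 1̄` as `0 < 1 < 2 < 3`.
`r1 j` is the entry of row 1 in column `j`, `r2 j` the entry of row 2 in column `j`. -/
structure KNTableau (l1 l2 : ℕ) where
  le : l2 ≤ l1
  r1 : Fin l1 → Fin 4
  r2 : Fin l2 → Fin 4
  row1_mono : Monotone r1
  row2_mono : Monotone r2
  col_strict : ∀ j : Fin l2, r1 (Fin.castLE le j) < r2 j
  no_one_onebar : ∀ j : Fin l2, ¬(r1 (Fin.castLE le j) = 0 ∧ r2 j = 3)
  forbidden1 : ∀ (j : ℕ) (h : j + 1 < l2),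
    ¬(r1 (Fin.castLE le ⟨j, Nat.lt_of_succ_lt h⟩) = 1 ∧
      r1 (Fin.castLE le ⟨j + 1, h⟩) = 1 ∧ r2 ⟨j + 1, h⟩ = 2)
  forbidden2 : ∀ (j : ℕ) (hj : j < l2) (h : j + 1 < l1),
    ¬(r1 (Fin.castLE le ⟨j, hj⟩) = 1 ∧ r2 ⟨j, hj⟩ = 2 ∧ r1 ⟨j + 1, h⟩ = 2)

open Finset

lemma Finset.card_filter_lt_le_card_filter_lt {α β : Type*} [Fintype α] [Preorder β]
    [DecidableLT β] (f : α → β) {a b : β} (hab : a ≤ b) :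
    #{x | b < f x} ≤ #{x | a < f x} :=
  card_le_card <| monotone_filter_right _ fun _ _ => hab.trans_lt

lemma Fin.card_filter_le_card_filter_castLE_add {m n : ℕ} (h : m ≤ n) (P : Fin n → Prop)
    [DecidablePred P] (Q : Fin m → Prop) [DecidablePred Q]
    (hPQ : ∀ i, P (Fin.castLE h i) → Q i) :
    #{j | P j} ≤ #{i | Q i} + (n - m) := by
  set e := Fin.castLEEmb h
  have hsub : ({j | P j} : Finset (Fin n)) ⊆
      ({i | Q i} : Finset (Fin m)).map e ∪ (univ.map e)ᶜ := by
    intro j hj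
    by_cases hje : j ∈ univ.map e
    · obtain ⟨i, -, rfl⟩ := mem_map.1 hje
      exact mem_union_left _ <|
        mem_map_of_mem e <| mem_filter.2 ⟨mem_univ i, hPQ i (mem_filter.1 hj).2⟩
    · exact mem_union_right _ (mem_compl.2 hje)
  calc #{j | P j} ≤ #(({i | Q i} : Finset (Fin m)).map e ∪ (univ.map e)ᶜ) := card_le_card hsub
    _ ≤ #(({i | Q i} : Finset (Fin m)).map e) + #(univ.map e)ᶜ := card_union_le _ _
    _ = #{i | Q i} + (n - m) := by simp [card_compl]

namespace KNTableau

variable {l1 l2 : ℕ} (T : KNTableau l1 l2) (j : Fin l2)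

lemma one_lt_r2_of_pos_r1 (hj : 0 < T.r1 (Fin.castLE T.le j)) : 1 < T.r2 j := by
  have := T.col_strict j
  omega

lemma two_lt_r2_of_one_lt_r1 (hj : 1 < T.r1 (Fin.castLE T.le j)) : 2 < T.r2 j := by
  have := T.col_strict j
  omega

lemma not_two_lt_r1 : ¬2 < T.r1 (Fin.castLE T.le j) := by
  have := T.col_strict j
  omega

end KNTableau

/-- For any KN tableau of `sp₄` of shape `(m1+m2, m2)`, the statistics
`a1 = #{row-2 entries > 2}`, `a2 = #{row-1 entries > 1} + #{row-2 entries > 2̄}`,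
`a3 = #{row-1 entries > 2}`, `a4 = #{row-1 entries > 2̄}` satisfy the
Verma-basis inequalities. -/
theorem kn_statistics_satisfy_inequalities (m1 m2 : ℕ)
    (T : KNTableau (m1 + m2) m2) :
    let a1 := (Finset.univ.filter fun j : Fin m2 => 1 < T.r2 j).card
    let a2 := (Finset.univ.filter fun j : Fin (m1 + m2) => 0 < T.r1 j).card
        + (Finset.univ.filter fun j : Fin m2 => 2 < T.r2 j).card
    let a3 := (Finset.univ.filter fun j : Fin (m1 + m2) => 1 < T.r1 j).card
    let a4 := (Finset.univ.filter fun j : Fin (m1 + m2) => 2 < T.r1 j).card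
    a1 ≤ m2 ∧ a2 ≤ m1 + 2 * a1 ∧ a3 ≤ min ((a2 + m1) / 2) a2 ∧
      a4 ≤ min m1 a3 := by
  intro a1 a2 a3 a4
  have h_a1 : a1 ≤ m2 := by simpa using card_filter_le (univ : Finset (Fin m2)) _
  have h_pos := Fin.card_filter_le_card_filter_castLE_add T.le (fun j => 0 < T.r1 j)
    (fun j => 1 < T.r2 j) T.one_lt_r2_of_pos_r1
  have h_one := Fin.card_filter_le_card_filter_castLE_add T.le (fun j => 1 < T.r1 j)
    (fun j => 2 < T.r2 j) T.two_lt_r2_of_one_lt_r1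
  have h_two : a4 ≤ m1 := by
    simpa using Fin.card_filter_le_card_filter_castLE_add T.le (fun j => 2 < T.r1 j)
      (fun _ => False) T.not_two_lt_r1
  have h_c : _ ≤ a1 := card_filter_lt_le_card_filter_lt T.r2 (show (1 : Fin 4) ≤ 2 by decide)
  have h_a3 := card_filter_lt_le_card_filter_lt T.r1 (show (0 : Fin 4) ≤ 1 by decide)
  have h_a4 : a4 ≤ a3 := card_filter_lt_le_card_filter_lt T.r1 (show (1 : Fin 4) ≤ 2 by decide)
  refine ⟨h_a1, by omega, le_min ((Nat.le_div_iff_mul_le two_pos).2 (by omega)) (by omega),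
    le_min h_two h_a4⟩
end

section
/- Let T be a KN tableau of sp4 of shape (m1+m2, m2) with k_i entries equal to i and k_{ī} entries equal to ī (i = 1,2), and let (a1,a2,a3,a4) be its associated statistics (a1 = #{row-2 entries > 2}, a2 = #{row-1 entries > 1} + #{row-2 entries > 2̄}, a3 = #{row-1 entries > 2}, a4 = #{row-1 entries > 2̄}). Then the weight wt(T) = (k_1 − k_{1̄})·ε1 + (k_2 − k_{2̄})·ε2 equals (m1+m2−a2−a4)·ε1 + (m2−2a1+a2−2a3+a4)·ε2. -/
/-! Splitting every row statistic `aᵢ` into the fibre counts `#{j | rᵢ j = e}` turns both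
coordinates into linear identities between these counts, which hold because strict column
increase keeps the letter `1` out of row 2. -/

open Finset

section FiberCounts

variable {ι α : Type*} [Fintype ι] [Fintype α] (f : ι → α)

theorem Fintype.card_eq_sum_card_fiber [DecidableEq α] :
    Fintype.card ι = ∑ e, #{j | f j = e} :=
  card_eq_sum_card_fiberwise fun j _ => mem_univ (f j)

theorem card_filter_lt_eq_sum_ite [LinearOrder α] (a : α) :
    #{j | a < f j} = ∑ e, if a < e then #{j | f j = e} else 0 := by
  rw [← sum_filter, sum_card_fiberwise_eq_card_filter]
  simp

end FiberCounts

theorem KNTableau.card_filter_r2_eq_zero {l1 l2 : ℕ} (T : KNTableau l1 l2) :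
    #{j | T.r2 j = 0} = 0 := by
  simp only [card_eq_zero, filter_eq_empty_iff, mem_univ, true_implies]
  exact fun j => (Fin.zero_le _ |>.trans_lt (T.col_strict j)).ne'

/-- The weight `wt(T) = (k₁ − k₁̄)·ε1 + (k₂ − k₂̄)·ε2` of a KN tableau of `sp₄` of
shape `(m1+m2, m2)` equals `(m1+m2−a2−a4)·ε1 + (m2−2a1+a2−2a3+a4)·ε2`, where
`(a1,a2,a3,a4)` are the associated statistics and weights are written as pairs of
integer coordinates with respect to `ε1, ε2`. -/
theorem kn_weight_eq (m1 m2 : ℕ) (T : KNTableau (m1 + m2) m2) :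
    let k : Fin 4 → ℕ := fun e =>
      (Finset.univ.filter fun j : Fin (m1 + m2) => T.r1 j = e).card
        + (Finset.univ.filter fun j : Fin m2 => T.r2 j = e).card
    let a1 := (Finset.univ.filter fun j : Fin m2 => 1 < T.r2 j).card
    let a2 := (Finset.univ.filter fun j : Fin (m1 + m2) => 0 < T.r1 j).card
        + (Finset.univ.filter fun j : Fin m2 => 2 < T.r2 j).card
    let a3 := (Finset.univ.filter fun j : Fin (m1 + m2) => 1 < T.r1 j).card
    let a4 := (Finset.univ.filter fun j : Fin (m1 + m2) => 2 < T.r1 j).card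
    (((k 0 : ℤ) - k 3, (k 1 : ℤ) - k 2) : ℤ × ℤ) =
      ((m1 : ℤ) + m2 - a2 - a4, (m2 : ℤ) - 2 * a1 + a2 - 2 * a3 + a4) := by
  intro k a1 a2 a3 a4
  have hcard_row1 := Fintype.card_eq_sum_card_fiber T.r1
  have hcard_row2 := Fintype.card_eq_sum_card_fiber T.r2
  have hrow2_no_one := T.card_filter_r2_eq_zero
  simp only [Fintype.card_fin, Fin.sum_univ_four] at hcard_row1 hcard_row2
  simp only [k, a1, a2, a3, a4, card_filter_lt_eq_sum_ite, Fin.sum_univ_four, Fin.reduceLT,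
    ite_true, ite_false, Prod.mk.injEq]
  omega
end
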